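/- arXiv:2501.09455 — 5 statements merged into one kernel-verified Lean document; each statement's English description precedes it below -/
import Mathlib

section
/- Every separable metrizable topological space X whose cardinality is strictly less than the bounding number 𝔟 is a λ-set. -/
open Filter

/-- The bounding number `𝔟`: the least cardinality of a subset of `ω^ω` that is
unbounded with respect to eventual domination `≤*`. -/
noncomputable def boundingNumber : Cardinal :=
  sInf { c : Cardinal | ∃ S : Set (ℕ → ℕ),
    ¬ (∃ g : ℕ → ℕ, ∀ f ∈ S, ∀ᶠ n in Filter.cofinite, f n ≤ g n) ∧ Cardinal.mk S = c }

/-- A space is a λ-set if every countable subset is Gδ. -/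
def IsLambdaSpace (X : Type*) [TopologicalSpace X] : Prop :=
  ∀ C : Set X, C.Countable → IsGδ C

/-- (Rothberger) Every separable metrizable space of size less than `𝔟` is a λ-set. -/
theorem isLambdaSpace_of_card_lt_boundingNumber (X : Type) [TopologicalSpace X]
    [TopologicalSpace.SeparableSpace X] [TopologicalSpace.MetrizableSpace X]
    (h : Cardinal.mk X < boundingNumber) : IsLambdaSpace X := by
  intro C hC
  letI : MetricSpace X := TopologicalSpace.metrizableSpaceMetric X
  rcases C.eq_empty_or_nonempty with rfl | hne
  · exact IsGδ.empty
  obtain ⟨c, rfl⟩ := Set.Countable.exists_eq_range hC hne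
  have hF : ∀ x : X, x ∉ Set.range c → ∃ fx : ℕ → ℕ,
      ∀ n, 1 / ((fx n : ℝ) + 1) < dist x (c n) := by
    intro x hx
    have hpos : ∀ n, 0 < dist x (c n) := fun n =>
      dist_pos.2 (fun e => hx ⟨n, e.symm⟩)
    choose fx hfx using fun n => exists_nat_one_div_lt (hpos n)
    exact ⟨fx, fun n => by simpa using hfx n⟩
  choose! F hF using hF
  have hSlt : Cardinal.mk (F '' (Set.range c)ᶜ) < boundingNumber :=
    lt_of_le_of_lt ((Cardinal.mk_image_le).trans (Cardinal.mk_set_le _)) h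
  have hbdd : ∃ g : ℕ → ℕ, ∀ f ∈ F '' (Set.range c)ᶜ,
      ∀ᶠ n in Filter.cofinite, f n ≤ g n := by
    by_contra hub
    exact hSlt.not_ge (csInf_le' ⟨_, hub, rfl⟩)
  obtain ⟨g, hg⟩ := hbdd
  have key : Set.range c = ⋂ m : ℕ, ⋃ n : ℕ,
      Metric.ball (c n) (min (1 / ((g n : ℝ) + 1)) (1 / ((m : ℝ) + 1))) := by
    apply Set.Subset.antisymm
    · rintro y ⟨n, rfl⟩
      refine Set.mem_iInter.2 fun m => Set.mem_iUnion.2 ⟨n, ?_⟩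
      have h1 : (0:ℝ) < min (1 / ((g n : ℝ) + 1)) (1 / ((m : ℝ) + 1)) := by
        apply lt_min <;> positivity
      simpa [Metric.mem_ball] using h1
    · intro x hx
      by_contra hxC
      have hev : {n : ℕ | ¬ F x n ≤ g n}.Finite :=
        Filter.eventually_cofinite.mp (hg (F x) ⟨x, hxC, rfl⟩)
      have hAsub : {n : ℕ | dist x (c n) < 1 / ((g n : ℝ) + 1)} ⊆
          {n : ℕ | ¬ F x n ≤ g n} := by
        intro n hn hle
        have h1 : 1 / ((g n : ℝ) + 1) ≤ 1 / ((F x n : ℝ) + 1) := by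
          apply one_div_le_one_div_of_le
          · positivity
          · have : (F x n : ℝ) ≤ (g n : ℝ) := by exact_mod_cast hle
            linarith
        have h2 := hF x hxC n
        have h3 : dist x (c n) < 1 / ((g n : ℝ) + 1) := hn
        linarith
      have hAfin : {n : ℕ | dist x (c n) < 1 / ((g n : ℝ) + 1)}.Finite :=
        hev.subset hAsub
      choose nm hnm using fun m : ℕ =>
        Set.mem_iUnion.1 (Set.mem_iInter.1 hx m)
      have hnm' : ∀ m : ℕ, dist x (c (nm m)) <
          min (1 / ((g (nm m) : ℝ) + 1)) (1 / ((m : ℝ) + 1)) := fun m =>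
        Metric.mem_ball.1 (hnm m)
      have hmemA : ∀ m : ℕ, nm m ∈ hAfin.toFinset := by
        intro m
        rw [Set.Finite.mem_toFinset]
        exact lt_of_lt_of_le (hnm' m) (min_le_left _ _)
      have hne' : hAfin.toFinset.Nonempty := ⟨nm 0, hmemA 0⟩
      set δ := hAfin.toFinset.inf' hne' (fun n => dist x (c n)) with hδ
      have hδpos : 0 < δ := by
        rw [hδ, Finset.lt_inf'_iff]
        intro n _
        exact dist_pos.2 (fun e => hxC ⟨n, e.symm⟩)
      obtain ⟨m, hm⟩ := exists_nat_one_div_lt hδpos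
      have h1 : δ ≤ dist x (c (nm m)) :=
        Finset.inf'_le _ (hmemA m)
      have h2 : dist x (c (nm m)) < 1 / ((m : ℝ) + 1) :=
        lt_of_lt_of_le (hnm' m) (min_le_right _ _)
      have hm' : 1 / ((m : ℝ) + 1) < δ := by simpa using hm
      linarith
  rw [key]
  exact IsGδ.iInter fun m => (isOpen_iUnion fun n => Metric.isOpen_ball).isGδ
end

section
/- Let X be a zero-dimensional separable metrizable topological group. If X is not locally precompact, then X is h-homogeneous, i.e., every non-empty clopen subspace of X is homeomorphic to X. -/
open Pointwise

/-- A space is zero-dimensional if it has a base of clopen sets. -/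
def ZeroDimensional (X : Type*) [TopologicalSpace X] : Prop :=
  ∃ B : Set (Set X), (∀ U ∈ B, IsClopen U) ∧ TopologicalSpace.IsTopologicalBasis B

/-- A subset `S` of a topological group is precompact if for every neighborhood `U` of
the identity there is a finite set `F` with `S ⊆ FU ∩ UF`. -/
def IsGroupPrecompact {G : Type*} [Group G] [TopologicalSpace G] (S : Set G) : Prop :=
  ∀ U ∈ nhds (1 : G), ∃ F : Finset G, S ⊆ ((F : Set G) * U) ∩ (U * (F : Set G))

/-- A topological group is locally precompact if the identity has a precompact
neighborhood. -/
def IsLocallyPrecompactGroup (G : Type*) [Group G] [TopologicalSpace G] : Prop :=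
  ∃ U ∈ nhds (1 : G), IsGroupPrecompact U

/-- A space is h-homogeneous if every non-empty clopen subspace is homeomorphic to it. -/
def IsHHomogeneous (X : Type*) [TopologicalSpace X] : Prop :=
  ∀ C : Set X, IsClopen C → C.Nonempty → Nonempty (C ≃ₜ X)



section HomeoUtils

variable {Z : Type*} [TopologicalSpace Z] {I : Type*}

/-- A disjoint family of open sets whose union is `S` gives `S ≃ₜ` the sigma type. -/
noncomputable def sigmaHomeoOfPartition (P : I → Set Z) (S : Set Z)
    (hopen : ∀ i, IsOpen (P i)) (hdisj : ∀ i j, i ≠ j → Disjoint (P i) (P j))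
    (hU : (⋃ i, P i) = S) : (Σ i, ↥(P i)) ≃ₜ ↥S := by
  have hsub : ∀ i, P i ⊆ S := fun i => hU ▸ Set.subset_iUnion P i
  let f : (Σ i, ↥(P i)) → ↥S := fun x => ⟨x.2.1, hsub x.1 x.2.2⟩
  have hbij : Function.Bijective f := by
    constructor
    · rintro ⟨i, a, ha⟩ ⟨j, b, hb⟩ h
      have hab : a = b := congrArg Subtype.val h
      subst hab
      have hij : i = j := by
        by_contra hne
        exact (hdisj i j hne).le_bot ⟨ha, hb⟩
      subst hij; rfl
    · rintro ⟨z, hz⟩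
      have : z ∈ ⋃ i, P i := hU.symm ▸ hz
      rcases Set.mem_iUnion.1 this with ⟨i, hi⟩
      exact ⟨⟨i, z, hi⟩, rfl⟩
  have hcont : Continuous f := by
    apply continuous_sigma
    intro i
    exact Continuous.subtype_mk continuous_subtype_val _
  have hopenmap : IsOpenMap f := by
    rw [isOpenMap_sigma]
    intro i
    intro U hUo
    rcases isOpen_induced_iff.1 hUo with ⟨V, hV, rfl⟩
    have himg : (fun a : ↥(P i) => f ⟨i, a⟩) '' (Subtype.val ⁻¹' V)
        = (Subtype.val : ↥S → Z) ⁻¹' (V ∩ P i) := by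
      ext z
      constructor
      · rintro ⟨a, haV, rfl⟩
        exact ⟨haV, a.2⟩
      · rintro ⟨hzV, hzP⟩
        exact ⟨⟨z.1, hzP⟩, hzV, rfl⟩
    rw [himg]
    exact (hV.inter (hopen i)).preimage continuous_subtype_val
  exact Equiv.toHomeomorphOfContinuousOpen (Equiv.ofBijective f hbij) hcont hopenmap

/-- Two disjoint open sets whose union is `S` give `S ≃ₜ` the sum. -/
noncomputable def sumHomeoOfPartition {K L S : Set Z} (hK : IsOpen K) (hL : IsOpen L)
    (hd : Disjoint K L) (hU : K ∪ L = S) : ↥K ⊕ ↥L ≃ₜ ↥S := by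
  have hKS : K ⊆ S := hU ▸ Set.subset_union_left
  have hLS : L ⊆ S := hU ▸ Set.subset_union_right
  let f : ↥K ⊕ ↥L → ↥S := Sum.elim (fun a => ⟨a.1, hKS a.2⟩) (fun b => ⟨b.1, hLS b.2⟩)
  have hbij : Function.Bijective f := by
    constructor
    · rintro (⟨a, ha⟩ | ⟨a, ha⟩) (⟨b, hb⟩ | ⟨b, hb⟩) h <;>
        simp only [f, Sum.elim_inl, Sum.elim_inr, Subtype.mk.injEq] at h
      · subst h; rfl
      · exact ((hd.le_bot ⟨ha, by rw [h]; exact hb⟩).elim)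
      · exact ((hd.le_bot ⟨by rw [h]; exact hb, ha⟩).elim)
      · subst h; rfl
    · rintro ⟨z, hz⟩
      rcases hU ▸ hz with hzK | hzL
      · exact ⟨Sum.inl ⟨z, hzK⟩, rfl⟩
      · exact ⟨Sum.inr ⟨z, hzL⟩, rfl⟩
  have hcont : Continuous f :=
    Continuous.sumElim (Continuous.subtype_mk continuous_subtype_val _)
      (Continuous.subtype_mk continuous_subtype_val _)
  have hopenmap : IsOpenMap f := by
    apply IsOpenMap.sumElim
    · intro U hUo
      rcases isOpen_induced_iff.1 hUo with ⟨V, hV, rfl⟩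
      have : (fun a : ↥K => (⟨a.1, hKS a.2⟩ : ↥S)) '' (Subtype.val ⁻¹' V)
          = (Subtype.val : ↥S → Z) ⁻¹' (V ∩ K) := by
        ext z; constructor
        · rintro ⟨a, haV, rfl⟩; exact ⟨haV, a.2⟩
        · rintro ⟨hzV, hzP⟩; exact ⟨⟨z.1, hzP⟩, hzV, rfl⟩
      rw [this]
      exact (hV.inter hK).preimage continuous_subtype_val
    · intro U hUo
      rcases isOpen_induced_iff.1 hUo with ⟨V, hV, rfl⟩
      have : (fun a : ↥L => (⟨a.1, hLS a.2⟩ : ↥S)) '' (Subtype.val ⁻¹' V)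
          = (Subtype.val : ↥S → Z) ⁻¹' (V ∩ L) := by
        ext z; constructor
        · rintro ⟨a, haV, rfl⟩; exact ⟨haV, a.2⟩
        · rintro ⟨hzV, hzP⟩; exact ⟨⟨z.1, hzP⟩, hzV, rfl⟩
      rw [this]
      exact (hV.inter hL).preimage continuous_subtype_val
  exact Equiv.toHomeomorphOfContinuousOpen (Equiv.ofBijective f hbij) hcont hopenmap

/-- Sigma congruence for homeomorphisms. -/
def homeoSigmaCongrRight {σ τ : I → Type*} [∀ i, TopologicalSpace (σ i)]
    [∀ i, TopologicalSpace (τ i)] (h : ∀ i, σ i ≃ₜ τ i) : (Σ i, σ i) ≃ₜ (Σ i, τ i) where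
  toEquiv := Equiv.sigmaCongrRight fun i => (h i).toEquiv
  continuous_toFun := continuous_sigma fun i => continuous_sigmaMk.comp (h i).continuous
  continuous_invFun := continuous_sigma fun i => continuous_sigmaMk.comp (h i).symm.continuous

/-- Sigma over a product index with fibers depending on the second coordinate. -/
def sigmaProdIndexHomeo {J : Type*} (F : J → Type*) [∀ j, TopologicalSpace (F j)] :
    (Σ p : I × J, F p.2) ≃ₜ (Σ _ : I, Σ j : J, F j) where
  toFun := fun x => ⟨x.1.1, ⟨x.1.2, x.2⟩⟩
  invFun := fun x => ⟨(x.1, x.2.1), x.2.2⟩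
  left_inv := by rintro ⟨⟨i, j⟩, x⟩; rfl
  right_inv := by rintro ⟨i, j, x⟩; rfl
  continuous_toFun := by
    apply continuous_sigma
    rintro ⟨i, j⟩
    exact (continuous_sigmaMk (σ := fun _ : I => Σ j : J, F j)).comp
      (continuous_sigmaMk (σ := F))
  continuous_invFun := by
    apply continuous_sigma
    intro i
    apply continuous_sigma
    intro j
    exact continuous_sigmaMk (σ := fun p : I × J => F p.2) (i := ((i, j) : I × J))

/-- For a discrete index, sigma with constant fiber is the product. -/
def sigmaConstHomeo (I Z : Type*) [TopologicalSpace I] [DiscreteTopology I]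
    [TopologicalSpace Z] : (Σ _ : I, Z) ≃ₜ I × Z where
  toEquiv := Equiv.sigmaEquivProd I Z
  continuous_toFun := continuous_sigma fun i => (continuous_const.prodMk continuous_id)
  continuous_invFun := by
    refine continuous_iff_continuousAt.2 ?_
    rintro ⟨i, z⟩
    have hopen : IsOpen ({p : I × Z | p.1 = i}) := by
      have : ({p : I × Z | p.1 = i}) = Prod.fst ⁻¹' {i} := rfl
      rw [this]
      exact (isOpen_discrete _).preimage continuous_fst
    refine ContinuousOn.continuousAt ?_ (hopen.mem_nhds rfl)
    have hco : ContinuousOn (fun p : I × Z => (⟨i, p.2⟩ : Σ _ : I, Z)) {p : I × Z | p.1 = i} := by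
      have : Continuous fun p : I × Z => (⟨i, p.2⟩ : Σ _ : I, Z) :=
        (continuous_sigmaMk (σ := fun _ : I => Z)).comp continuous_snd
      exact this.continuousOn
    refine hco.congr ?_
    rintro ⟨i', z'⟩ hp
    simp only [Set.mem_setOf_eq] at hp
    subst hp
    rfl

/-- `ℕ ≃ₜ PUnit ⊕ ℕ`. -/
noncomputable def natSumPUnitHomeo : ℕ ≃ₜ (PUnit.{1} ⊕ ℕ) where
  toEquiv := ((Denumerable.eqv (Option ℕ)).symm.trans
    ((Equiv.optionEquivSumPUnit ℕ).trans (Equiv.sumComm _ _)))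
  continuous_toFun := continuous_of_discreteTopology
  continuous_invFun := continuous_of_discreteTopology

/-- `ℕ × Z ≃ₜ Z ⊕ ℕ × Z`. -/
noncomputable def natProdSplitHomeo (Z : Type*) [TopologicalSpace Z] :
    ℕ × Z ≃ₜ Z ⊕ ℕ × Z :=
  (Homeomorph.prodCongr natSumPUnitHomeo (Homeomorph.refl Z)).trans
    ((Homeomorph.sumProdDistrib).trans
      (Homeomorph.sumCongr (Homeomorph.punitProd Z) (Homeomorph.refl _)))

end HomeoUtils

section GroupAux

variable {X : Type*} [TopologicalSpace X] [Group X] [IsTopologicalGroup X]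

lemma smul_set_eq_preimage (g : X) (s : Set X) :
    g • s = (fun x => g⁻¹ * x) ⁻¹' s := by
  ext u
  constructor
  · rintro ⟨v, hv, rfl⟩
    simpa [smul_eq_mul] using hv
  · intro hu
    exact ⟨g⁻¹ * u, hu, by simp [smul_eq_mul]⟩

lemma IsClopen.smul_left {s : Set X} (h : IsClopen s) (g : X) : IsClopen (g • s) := by
  rw [smul_set_eq_preimage]
  exact h.preimage (continuous_const.mul continuous_id)

/-- A homeomorphism from a set to its left translate. -/
noncomputable def smulHomeo (g : X) (s : Set X) : ↥s ≃ₜ ↥(g • s) := by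
  refine (Homeomorph.image (Homeomorph.mulLeft g) s).trans (Homeomorph.setCongr ?_)
  ext u
  simp only [Set.mem_image, Homeomorph.coe_mulLeft]
  constructor
  · rintro ⟨v, hv, rfl⟩; exact ⟨v, hv, rfl⟩
  · rintro ⟨v, hv, rfl⟩; exact ⟨v, hv, rfl⟩

/-- From non-local-precompactness: every symmetric neighborhood of 1 admits a symmetric open
neighborhood of 1 by left translates of which it cannot be finitely covered. -/
lemma exists_noncover (h1 : ¬ IsLocallyPrecompactGroup X) {U : Set X} (hU : U ∈ nhds 1)
    (hUsym : U⁻¹ = U) :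
    ∃ W : Set X, IsOpen W ∧ (1 : X) ∈ W ∧ W⁻¹ = W ∧ W ⊆ U ∧
      ∀ F : Finset X, ¬ U ⊆ (F : Set X) * W := by
  classical
  have hU1 : ¬ IsGroupPrecompact U := fun h => h1 ⟨U, hU, h⟩
  rw [IsGroupPrecompact] at hU1
  push_neg at hU1
  obtain ⟨U₁, hU₁, hF⟩ := hU1
  obtain ⟨O, hOsub, hO, hO1⟩ := mem_nhds_iff.1 (Filter.inter_mem hU₁ hU)
  refine ⟨O ∩ O⁻¹, hO.inter hO.inv, ⟨hO1, by simpa using hO1⟩, ?_, ?_, ?_⟩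
  · simp [Set.inter_inv, Set.inter_comm]
  · exact fun x hx => (hOsub hx.1).2
  · intro F hcov
    apply hF (F ∪ F⁻¹)
    apply Set.subset_inter
    · calc U ⊆ (F : Set X) * (O ∩ O⁻¹) := hcov
        _ ⊆ (F : Set X) * U₁ := Set.mul_subset_mul_left (fun x hx => (hOsub hx.1).1)
        _ ⊆ ((F ∪ F⁻¹ : Finset X) : Set X) * U₁ := by
            apply Set.mul_subset_mul_right
            simp only [Finset.coe_union]
            exact Set.subset_union_left
    · have h2 : U ⊆ (O ∩ O⁻¹) * (F⁻¹ : Finset X) := by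
        intro x hx
        have hxinv : x⁻¹ ∈ U := by rw [← hUsym]; simpa using hx
        have := hcov hxinv
        rcases this with ⟨f, hf, w, hw, hfw⟩
        refine ⟨w⁻¹, ?_, f⁻¹, ?_, ?_⟩
        · constructor
          · have : w ∈ O⁻¹ := hw.2
            simpa using this
          · simpa using hw.1
        · simp only [Finset.coe_inv]
          exact Set.inv_mem_inv.2 hf
        · have hfw' : f * w = x⁻¹ := hfw
          have : x = (f * w)⁻¹ := by rw [hfw']; simp
          rw [this, mul_inv_rev]
      calc U ⊆ (O ∩ O⁻¹) * (F⁻¹ : Finset X) := h2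
        _ ⊆ U₁ * (F⁻¹ : Finset X) := Set.mul_subset_mul_right (fun x hx => (hOsub hx.1).1)
        _ ⊆ U₁ * ((F ∪ F⁻¹ : Finset X) : Set X) := by
            apply Set.mul_subset_mul_left
            simp only [Finset.coe_union]
            exact Set.subset_union_right

/-- Greedy construction of an infinite separated sequence in a non-coverable set. -/
lemma exists_separated_seq {T W : Set X} (hWsym : W⁻¹ = W)
    (hT : ∀ F : Finset X, ¬ T ⊆ (F : Set X) * W) :
    ∃ y : ℕ → X, (∀ n, y n ∈ T) ∧ ∀ m n, m ≠ n → y n ∉ y m • W := by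
  classical
  have step : ∀ s : Finset X, ∃ z, z ∈ T ∧ z ∉ (s : Set X) * W := by
    intro s
    by_contra h
    push_neg at h
    exact hT s h
  choose f hfT hfn using step
  let F : ℕ → Finset X := fun n => Nat.rec ∅ (fun _ s => insert (f s) s) n
  have hFsucc : ∀ n, F (n + 1) = insert (f (F n)) (F n) := fun n => rfl
  have hmem : ∀ m n, m < n → f (F m) ∈ F n := by
    intro m n hmn
    induction n with
    | zero => omega
    | succ k ih =>
      rw [hFsucc]
      rcases Nat.lt_succ_iff_lt_or_eq.1 hmn with h | h
      · exact Finset.mem_insert_of_mem (ih h)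
      · subst h; exact Finset.mem_insert_self _ _
  refine ⟨fun n => f (F n), fun n => hfT _, ?_⟩
  have oneside : ∀ m n, m < n → f (F n) ∉ f (F m) • W := by
    intro m n hmn hmem'
    apply hfn (F n)
    rcases hmem' with ⟨w, hw, hww⟩
    have h' : f (F m) * w = f (F n) := by simpa [smul_eq_mul] using hww
    rw [← h']
    exact Set.mul_mem_mul (hmem m n hmn) hw
  intro m n hmn hin
  rcases lt_or_gt_of_ne hmn with h | h
  · exact oneside m n h hin
  · rcases hin with ⟨w, hw, hww⟩
    have h' : f (F m) * w = f (F n) := by simpa [smul_eq_mul] using hww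
    apply oneside n m h
    refine ⟨w⁻¹, ?_, ?_⟩
    · rw [← hWsym]; simpa using hw
    · show f (F n) • w⁻¹ = f (F m)
      rw [smul_eq_mul, ← h', mul_assoc]
      simp

end GroupAux

section PartAux

variable {X : Type*} [TopologicalSpace X] [Group X] [IsTopologicalGroup X]

/-- Partition of a clopen set into countably many clopen pieces, each inside a left
translate of a given open neighborhood of 1. Pieces may be empty. -/
lemma exists_clopen_partition [SecondCountableTopology X]
    (h0 : ZeroDimensional X) {A V : Set X} (hA : IsClopen A) (hV : IsOpen V)
    (h1V : (1 : X) ∈ V) :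
    ∃ P : ℕ → Set X, (∀ n, IsClopen (P n)) ∧ (∀ m n, m ≠ n → Disjoint (P m) (P n)) ∧
      (⋃ n, P n) = A ∧ ∀ n, ∃ x : X, P n ⊆ x • V := by
  classical
  rcases A.eq_empty_or_nonempty with rfl | hAne
  · exact ⟨fun _ => ∅, fun _ => isClopen_empty, fun _ _ _ => disjoint_bot_left,
      by simp, fun _ => ⟨1, by simp⟩⟩
  obtain ⟨ℬ, hℬclopen, hℬbasis⟩ := h0
  set 𝒞 : Set (Set X) := {C | IsClopen C ∧ C ⊆ A ∧ ∃ x : X, C ⊆ x • V} with h𝒞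
  have hcov : ⋃₀ 𝒞 = A := by
    apply Set.Subset.antisymm
    · exact Set.sUnion_subset fun C hC => hC.2.1
    · intro a ha
      have haV : a ∈ a • V := ⟨1, h1V, by simp [smul_eq_mul]⟩
      have hopen : IsOpen (A ∩ a • V) := hA.isOpen.inter (hV.smul a)
      obtain ⟨C, hCB, haC, hCsub⟩ := hℬbasis.exists_subset_of_mem_open (Set.mem_inter ha haV) hopen
      exact ⟨C, ⟨hℬclopen C hCB, hCsub.trans Set.inter_subset_left,
        a, hCsub.trans Set.inter_subset_right⟩, haC⟩
  obtain ⟨T, hTc, hTsub, hTU⟩ := TopologicalSpace.isOpen_sUnion_countable 𝒞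
    (fun s hs => hs.1.isOpen)
  have hTA : ⋃₀ T = A := by rw [hTU, hcov]
  have hTne : T.Nonempty := by
    rcases hAne with ⟨a, ha⟩
    rw [← hTA] at ha
    rcases ha with ⟨t, ht, _⟩
    exact ⟨t, ht⟩
  obtain ⟨g, hg⟩ := hTc.exists_eq_range hTne
  have hgmem : ∀ n, g n ∈ 𝒞 := fun n => hTsub (hg ▸ Set.mem_range_self n)
  set P : ℕ → Set X := fun n => g n \ ⋃ k : Fin n, g k with hP
  have hPsub : ∀ n, P n ⊆ g n := fun n => Set.diff_subset
  refine ⟨P, ?_, ?_, ?_, ?_⟩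
  · intro n
    exact (hgmem n).1.diff (isClopen_iUnion_of_finite fun k => (hgmem k).1)
  · have key : ∀ m n, m < n → Disjoint (P m) (P n) := by
      intro m n hmn
      rw [Set.disjoint_left]
      intro a haPm haPn
      exact haPn.2 (Set.mem_iUnion.2 ⟨⟨m, hmn⟩, hPsub m haPm⟩)
    intro m n hmn
    rcases lt_or_gt_of_ne hmn with h | h
    · exact key m n h
    · exact (key n m h).symm
  · apply Set.Subset.antisymm
    · exact Set.iUnion_subset fun n => (hPsub n).trans (hgmem n).2.1
    · intro a ha
      have : ∃ n, a ∈ g n := by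
        rw [← hTA] at ha
        rcases ha with ⟨t, ht, hat⟩
        rw [hg] at ht
        rcases ht with ⟨n, rfl⟩
        exact ⟨n, hat⟩
      set n₀ := Nat.find this with hn₀
      refine Set.mem_iUnion.2 ⟨n₀, Nat.find_spec this, ?_⟩
      intro hmem
      rcases Set.mem_iUnion.1 hmem with ⟨⟨k, hk⟩, hak⟩
      exact Nat.find_min this hk hak
  · intro n
    exact ⟨(hgmem n).2.2.choose, (hPsub n).trans (hgmem n).2.2.choose_spec⟩

/-- A union of clopen sets sitting inside uniformly separated translates is closed. -/
lemma isClosed_iUnion_separated {ι : Type*} {V W : Set X} (hVo : IsOpen V)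
    (h1V : (1 : X) ∈ V) (hVsym : V⁻¹ = V) (hVW : V * V * V * V ⊆ W)
    {y : ι → X} (hsep : ∀ i j, i ≠ j → y j ∉ y i • W)
    {R : ι → Set X} (hRcl : ∀ i, IsClosed (R i)) (hRsub : ∀ i, R i ⊆ y i • V) :
    IsClosed (⋃ i, R i) := by
  rw [← isOpen_compl_iff]
  rw [isOpen_iff_forall_mem_open]
  intro z hz
  have hzV : z ∈ z • V := ⟨1, h1V, by simp [smul_eq_mul]⟩
  have hsub : Set.Subsingleton {i : ι | (z • V ∩ y i • V).Nonempty} := by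
    intro i hi j hj
    by_contra hne
    rcases hi with ⟨u, ⟨a, ha, hau⟩, ⟨b, hb, hbu⟩⟩
    rcases hj with ⟨v, ⟨c, hc, hcv⟩, ⟨d, hd, hdv⟩⟩
    have hau' : z * a = u := by simpa [smul_eq_mul] using hau
    have hbu' : y i * b = u := by simpa [smul_eq_mul] using hbu
    have hcv' : z * c = v := by simpa [smul_eq_mul] using hcv
    have hdv' : y j * d = v := by simpa [smul_eq_mul] using hdv
    apply hsep i j hne
    have hinv : ∀ e : X, e ∈ V → e⁻¹ ∈ V := by
      intro e he
      rw [← hVsym]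
      simpa using he
    refine ⟨b * a⁻¹ * c * d⁻¹, hVW (Set.mul_mem_mul (Set.mul_mem_mul
      (Set.mul_mem_mul hb (hinv a ha)) hc) (hinv d hd)), ?_⟩
    show y i * (b * a⁻¹ * c * d⁻¹) = y j
    have h1 : y i * b = z * a := by rw [hbu', hau']
    have h2 : z * c = y j * d := by rw [hcv', hdv']
    calc y i * (b * a⁻¹ * c * d⁻¹) = ((y i * b) * a⁻¹) * c * d⁻¹ := by
          simp [mul_assoc]
      _ = ((z * a) * a⁻¹) * c * d⁻¹ := by rw [h1]
      _ = (z * c) * d⁻¹ := by simp [mul_assoc]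
      _ = (y j * d) * d⁻¹ := by rw [h2]
      _ = y j := by simp [mul_assoc]
  by_cases hM : ({i : ι | (z • V ∩ y i • V).Nonempty}).Nonempty
  · rcases hM with ⟨i₀, hi₀⟩
    refine ⟨z • V ∩ (R i₀)ᶜ, ?_, (hVo.smul z).inter (hRcl i₀).isOpen_compl,
      hzV, fun h => hz (Set.mem_iUnion.2 ⟨i₀, h⟩)⟩
    intro u hu
    simp only [Set.mem_compl_iff, Set.mem_iUnion]
    rintro ⟨i, hiR⟩
    by_cases hii : i = i₀
    · exact hu.2 (hii ▸ hiR)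
    · exact hii (hsub (Set.nonempty_def.2 ⟨u, hu.1, hRsub i hiR⟩) hi₀)
  · refine ⟨z • V, ?_, hVo.smul z, hzV⟩
    intro u hu
    simp only [Set.mem_compl_iff, Set.mem_iUnion]
    rintro ⟨i, hiR⟩
    exact hM ⟨i, ⟨u, hu, hRsub i hiR⟩⟩

end PartAux

section KeyLemma

variable {X : Type*} [TopologicalSpace X] [Group X] [IsTopologicalGroup X]

lemma not_isOpen_singleton_group (h1 : ¬ IsLocallyPrecompactGroup X) (x : X) :
    ¬ IsOpen ({x} : Set X) := by
  intro hx
  have hpre : ({1} : Set X) = (fun z => x * z) ⁻¹' {x} := by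
    ext z; simp
  have h1' : IsOpen ({1} : Set X) := by
    rw [hpre]; exact hx.preimage (continuous_const.mul continuous_id)
  apply h1
  refine ⟨{1}, h1'.mem_nhds rfl, ?_⟩
  intro U' hU'
  refine ⟨{1}, ?_⟩
  intro z hz
  rw [Set.mem_singleton_iff] at hz
  subst hz
  have h1U : (1 : X) ∈ U' := mem_of_mem_nhds hU'
  have hmF : (1 : X) ∈ (↑({1} : Finset X) : Set X) := by simp
  refine ⟨?_, ?_⟩
  · simpa using Set.mul_mem_mul hmF h1U
  · simpa using Set.mul_mem_mul h1U hmF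

lemma key_embed [SecondCountableTopology X] [T1Space X]
    (h0 : ZeroDimensional X) (h1 : ¬ IsLocallyPrecompactGroup X)
    {A B : Set X} (hA : IsClopen A) (hAne : A.Nonempty) (hB : IsClopen B)
    (hBne : B.Nonempty) :
    ∃ B₁ : Set X, IsClopen B₁ ∧ B₁.Nonempty ∧ Nonempty (↥B ≃ₜ (ℕ × ↥A) ⊕ ↥B₁) := by
  classical
  obtain ⟨ℬ, hℬclopen, hℬbasis⟩ := h0
  obtain ⟨b₁, hb₁⟩ := hBne
  have hb2 : ∃ b₂ ∈ B, b₂ ≠ b₁ := by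
    by_contra h
    push_neg at h
    have hBsing : B = {b₁} := Set.eq_singleton_iff_unique_mem.2 ⟨hb₁, h⟩
    exact not_isOpen_singleton_group h1 b₁ (hBsing ▸ hB.isOpen)
  obtain ⟨b₂, hb₂B, hb₂ne⟩ := hb2
  have hopen : IsOpen (B ∩ {b₂}ᶜ) := hB.isOpen.inter isOpen_compl_singleton
  obtain ⟨U, hUB, hb₁U, hUsub⟩ := hℬbasis.exists_subset_of_mem_open
    (Set.mem_inter hb₁ (Set.mem_compl_singleton_iff.2 (Ne.symm hb₂ne))) hopen
  have hUclopen := hℬclopen U hUB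
  set B'' := B \ U with hB''def
  have hB''clopen : IsClopen B'' := hB.diff hUclopen
  have hb₂B'' : b₂ ∈ B'' := ⟨hb₂B, fun h => (hUsub h).2 rfl⟩
  -- a symmetric open neighborhood V₀ of 1 with b₂ • (V₀ * V₀) ⊆ B''
  have hmem1 : (1 : X) ∈ b₂⁻¹ • B'' :=
    Set.mem_smul_set.2 ⟨b₂, hb₂B'', by simp [smul_eq_mul]⟩
  have hopen1 : IsOpen (b₂⁻¹ • B'') := hB''clopen.isOpen.smul _
  obtain ⟨V, hVo, hV1, hVV⟩ := exists_open_nhds_one_mul_subset (hopen1.mem_nhds hmem1)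
  set V₀ := V ∩ V⁻¹ with hV₀def
  have hV₀o : IsOpen V₀ := hVo.inter hVo.inv
  have hV₀1 : (1 : X) ∈ V₀ := ⟨hV1, by simpa using hV1⟩
  have hV₀sym : V₀⁻¹ = V₀ := by simp [hV₀def, Set.inter_inv, Set.inter_comm]
  have hV₀sub : ∀ u ∈ V₀ * V₀, b₂ * u ∈ B'' := by
    intro u hu
    have hmem : u ∈ b₂⁻¹ • B'' :=
      hVV (Set.mul_subset_mul Set.inter_subset_left Set.inter_subset_left hu)
    rcases Set.mem_smul_set.1 hmem with ⟨w, hw, hwu⟩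
    rw [smul_eq_mul] at hwu
    rw [← hwu, ← mul_assoc]
    simpa using hw
  -- W : symmetric open neighborhood of 1, no finite cover of V₀ by translates of W
  obtain ⟨W, hWo, hW1, hWsym, hWV₀, hWnc⟩ := exists_noncover h1 (hV₀o.mem_nhds hV₀1) hV₀sym
  -- V' : symmetric open neighborhood of 1 with V'*V'*V'*V' ⊆ W
  obtain ⟨V₂, hV₂o, hV₂1, hV₂W⟩ := exists_open_nhds_one_mul_subset (hWo.mem_nhds hW1)
  obtain ⟨V₃, hV₃o, hV₃1, hV₃V₂⟩ := exists_open_nhds_one_mul_subset (hV₂o.mem_nhds hV₂1)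
  set V' := V₃ ∩ V₃⁻¹ with hV'def
  have hV'o : IsOpen V' := hV₃o.inter hV₃o.inv
  have hV'1 : (1 : X) ∈ V' := ⟨hV₃1, by simpa using hV₃1⟩
  have hV'sym : V'⁻¹ = V' := by simp [hV'def, Set.inter_inv, Set.inter_comm]
  have hV'V₃ : V' ⊆ V₃ := Set.inter_subset_left
  have hV'W : V' * V' * V' * V' ⊆ W := by
    have e1 : V' * V' * V' * V' = (V' * V') * (V' * V') := mul_assoc (V' * V') V' V'
    rw [e1]
    calc (V' * V') * (V' * V') ⊆ (V₃ * V₃) * (V₃ * V₃) :=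
          Set.mul_subset_mul (Set.mul_subset_mul hV'V₃ hV'V₃) (Set.mul_subset_mul hV'V₃ hV'V₃)
      _ ⊆ V₂ * V₂ := Set.mul_subset_mul hV₃V₂ hV₃V₂
      _ ⊆ W := hV₂W
  have hV₃V₂' : V₃ ⊆ V₂ := fun v hv => hV₃V₂ (by simpa using Set.mul_mem_mul hv hV₃1)
  have hV₂W' : V₂ ⊆ W := fun v hv => hV₂W (by simpa using Set.mul_mem_mul hv hV₂1)
  have hV'V₀ : V' ⊆ V₀ := fun v hv => hWV₀ (hV₂W' (hV₃V₂' (hV'V₃ hv)))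
  -- noncover of b₂ • V₀
  have hTnc : ∀ F : Finset X, ¬ (b₂ • V₀) ⊆ (F : Set X) * W := by
    intro F hcov
    apply hWnc (b₂⁻¹ • F)
    intro v hv
    have hmem : b₂ * v ∈ (F : Set X) * W := by
      have := hcov (Set.smul_mem_smul_set hv)
      simpa [smul_eq_mul] using this
    rcases hmem with ⟨f, hf, w, hw, hfw⟩
    refine ⟨b₂⁻¹ * f, ?_, w, hw, ?_⟩
    · rw [Finset.coe_smul_finset]
      simpa [smul_eq_mul] using Set.smul_mem_smul_set (a := b₂⁻¹) hf
    · have hfw' : f * w = b₂ * v := hfw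
      show b₂⁻¹ * f * w = v
      rw [mul_assoc, hfw', inv_mul_cancel_left]
  obtain ⟨y, hyT, hysep⟩ := exists_separated_seq hWsym hTnc
  -- partition of A into V'-small clopen pieces
  obtain ⟨P, hPclopen, hPdisj, hPU, hPsmall⟩ :=
    exists_clopen_partition ⟨ℬ, hℬclopen, hℬbasis⟩ hA hV'o hV'1
  choose x hx using hPsmall
  set e : ℕ × ℕ ≃ ℕ := Denumerable.eqv (ℕ × ℕ) with hedef
  set gg : ℕ × ℕ → X := fun p => y (e p) * (x p.2)⁻¹ with hggdef
  set R : ℕ × ℕ → Set X := fun p => gg p • P p.2 with hRdef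
  have hRclopen : ∀ p, IsClopen (R p) := fun p => (hPclopen p.2).smul_left _
  have hRsub : ∀ p, R p ⊆ y (e p) • V' := by
    intro p u hu
    rcases Set.mem_smul_set.1 hu with ⟨v, hv, hvu⟩
    rw [smul_eq_mul] at hvu
    rcases Set.mem_smul_set.1 (hx p.2 hv) with ⟨v', hv', hv'v⟩
    rw [smul_eq_mul] at hv'v
    refine Set.mem_smul_set.2 ⟨v', hv', ?_⟩
    rw [smul_eq_mul, ← hvu, ← hv'v, hggdef]
    simp [mul_assoc]
  have hsep' : ∀ p q : ℕ × ℕ, p ≠ q → y (e q) ∉ y (e p) • W :=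
    fun p q hpq => hysep (e p) (e q) (fun h => hpq (e.injective h))
  have hRdisj : ∀ p q, p ≠ q → Disjoint (R p) (R q) := by
    intro p q hpq
    rw [Set.disjoint_left]
    intro u hup huq
    rcases Set.mem_smul_set.1 (hRsub p hup) with ⟨v₁, hv₁, hv₁u⟩
    rcases Set.mem_smul_set.1 (hRsub q huq) with ⟨v₂, hv₂, hv₂u⟩
    rw [smul_eq_mul] at hv₁u hv₂u
    apply hsep' p q hpq
    have hv₂i : v₂⁻¹ ∈ V' := by rw [← hV'sym]; simpa using hv₂
    refine Set.mem_smul_set.2 ⟨v₁ * v₂⁻¹, ?_, ?_⟩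
    · apply hV'W
      have hmul : v₁ * v₂⁻¹ * 1 * 1 ∈ V' * V' * V' * V' :=
        Set.mul_mem_mul (Set.mul_mem_mul (Set.mul_mem_mul hv₁ hv₂i) hV'1) hV'1
      simpa using hmul
    · rw [smul_eq_mul]
      calc y (e p) * (v₁ * v₂⁻¹) = (y (e p) * v₁) * v₂⁻¹ := by rw [mul_assoc]
        _ = (y (e q) * v₂) * v₂⁻¹ := by rw [hv₁u, hv₂u]
        _ = y (e q) := by simp [mul_assoc]
  set K := ⋃ p, R p with hKdef
  have hKopen : IsOpen K := isOpen_iUnion fun p => (hRclopen p).isOpen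
  have hKclosed : IsClosed K := isClosed_iUnion_separated hV'o hV'1 hV'sym hV'W
    (y := fun p => y (e p)) hsep' (fun p => (hRclopen p).isClosed) hRsub
  have hKB'' : K ⊆ B'' := by
    intro u hu
    rcases Set.mem_iUnion.1 hu with ⟨p, hp⟩
    rcases Set.mem_smul_set.1 (hRsub p hp) with ⟨v', hv', hv'u⟩
    rw [smul_eq_mul] at hv'u
    rcases Set.mem_smul_set.1 (hyT (e p)) with ⟨v₀, hv₀, hv₀y⟩
    rw [smul_eq_mul] at hv₀y
    have hu' : u = b₂ * (v₀ * v') := by rw [← hv'u, ← hv₀y, mul_assoc]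
    rw [hu']
    exact hV₀sub _ (Set.mul_mem_mul hv₀ (hV'V₀ hv'))
  have hKB : K ⊆ B := hKB''.trans Set.diff_subset
  set B₁ := B \ K with hB₁def
  have hB₁clopen : IsClopen B₁ := hB.diff ⟨hKclosed, hKopen⟩
  have hb₁B₁ : b₁ ∈ B₁ := ⟨hb₁, fun h => (hKB'' h).2 hb₁U⟩
  have hAhomeo : (Σ n : ℕ, ↥(P n)) ≃ₜ ↥A :=
    sigmaHomeoOfPartition P A (fun n => (hPclopen n).isOpen) hPdisj hPU
  have hKhomeo : (Σ p : ℕ × ℕ, ↥(R p)) ≃ₜ ↥K :=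
    sigmaHomeoOfPartition R K (fun p => (hRclopen p).isOpen) hRdisj rfl
  have hRPhomeo : ∀ p : ℕ × ℕ, ↥(R p) ≃ₜ ↥(P p.2) := fun p => (smulHomeo (gg p) (P p.2)).symm
  have hKA : ↥K ≃ₜ ℕ × ↥A :=
    hKhomeo.symm.trans ((homeoSigmaCongrRight hRPhomeo).trans
      ((sigmaProdIndexHomeo (fun i : ℕ => ↥(P i))).trans
        ((sigmaConstHomeo ℕ _).trans (Homeomorph.prodCongr (Homeomorph.refl ℕ) hAhomeo))))
  have hsum : ↥K ⊕ ↥B₁ ≃ₜ ↥B := sumHomeoOfPartition hKopen hB₁clopen.isOpen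
    (Set.disjoint_left.2 fun u hu hu' => hu'.2 hu) (Set.union_diff_cancel hKB)
  exact ⟨B₁, hB₁clopen, ⟨b₁, hb₁B₁⟩,
    ⟨hsum.symm.trans (Homeomorph.sumCongr hKA (Homeomorph.refl _))⟩⟩

end KeyLemma

/-- (Medvedev) A zero-dimensional separable metrizable topological group which is not
locally precompact is h-homogeneous. -/
theorem isHHomogeneous_of_not_locallyPrecompact (X : Type*) [TopologicalSpace X]
    [Group X] [IsTopologicalGroup X] [TopologicalSpace.SeparableSpace X]
    [TopologicalSpace.MetrizableSpace X]
    (h0 : ZeroDimensional X) (h1 : ¬ IsLocallyPrecompactGroup X) :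
    IsHHomogeneous X := by
  letI := TopologicalSpace.metrizableSpaceMetric X
  haveI : SecondCountableTopology X := UniformSpace.secondCountable_of_separable X
  intro C hC hCne
  -- key embeddings both ways
  obtain ⟨B₁, hB₁clopen, hB₁ne, ⟨eB⟩⟩ := key_embed h0 h1 hC hCne isClopen_univ
    ⟨1, Set.mem_univ 1⟩
  obtain ⟨A₁, hA₁clopen, hA₁ne, ⟨eA⟩⟩ := key_embed h0 h1 isClopen_univ ⟨1, Set.mem_univ 1⟩
    hC hCne
  -- eB : univ ≃ₜ (ℕ × C) ⊕ B₁ ;  eA : C ≃ₜ (ℕ × univ) ⊕ A₁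
  have chainB : ↥(Set.univ : Set X) ≃ₜ ↥C ⊕ ↥(Set.univ : Set X) :=
    eB.trans ((Homeomorph.sumCongr (natProdSplitHomeo ↥C) (Homeomorph.refl _)).trans
      ((Homeomorph.sumAssoc _ _ _).trans (Homeomorph.sumCongr (Homeomorph.refl _) eB.symm)))
  have chainA : ↥C ≃ₜ ↥(Set.univ : Set X) ⊕ ↥C :=
    eA.trans ((Homeomorph.sumCongr (natProdSplitHomeo ↥(Set.univ : Set X))
        (Homeomorph.refl _)).trans
      ((Homeomorph.sumAssoc _ _ _).trans (Homeomorph.sumCongr (Homeomorph.refl _) eA.symm)))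
  have final : ↥C ≃ₜ ↥(Set.univ : Set X) :=
    chainA.trans ((Homeomorph.sumComm _ _).trans chainB.symm)
  exact ⟨final.trans (Homeomorph.Set.univ X)⟩
end

section
/- Let X be a crowded Baire separable metrizable topological group that is countable dense homogeneous. Then there exists a homeomorphism h : X → X such that the set { h(x) · x⁻¹ : x ∈ X } is uncountable. -/
/-- A space is crowded if it is non-empty and has no isolated points. -/
def Crowded (X : Type*) [TopologicalSpace X] : Prop :=
  Nonempty X ∧ ∀ x : X, ¬ IsOpen ({x} : Set X)

/-- A space is countable dense homogeneous (CDH) if for every pair of countable dense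
subsets `D`, `E` there is a homeomorphism mapping `D` onto `E`. -/
def IsCDH (X : Type*) [TopologicalSpace X] : Prop :=
  ∀ D E : Set X, D.Countable → Dense D → E.Countable → Dense E →
    ∃ h : X ≃ₜ X, h '' D = E

/-- Auxiliary sequence built by recursion, avoiding previously forbidden elements. -/
private noncomputable def seqAux {α : Type*} {V : ℕ → Set α} {R : α → α → Prop}
    (H : ∀ (n : ℕ) (p : ∀ m, m < n → α), ∃ x, x ∈ V n ∧ ∀ m (hm : m < n), R (p m hm) x) :
    ℕ → α
  | n => Classical.choose (H n (fun m _ => seqAux H m))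

private lemma seqAux_spec {α : Type*} {V : ℕ → Set α} {R : α → α → Prop}
    (H : ∀ (n : ℕ) (p : ∀ m, m < n → α), ∃ x, x ∈ V n ∧ ∀ m (hm : m < n), R (p m hm) x)
    (n : ℕ) :
    seqAux H n ∈ V n ∧ ∀ m, m < n → R (seqAux H m) (seqAux H n) := by
  rw [seqAux]
  exact Classical.choose_spec (H n (fun m _ => seqAux H m))

/-- In a T1 space without isolated points, countable sets are meagre. -/
private lemma countable_isMeagre_aux {X : Type*} [TopologicalSpace X] [T1Space X]
    (hiso : ∀ x : X, ¬ IsOpen ({x} : Set X)) {s : Set X} (hs : s.Countable) :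
    IsMeagre s := by
  rw [isMeagre_iff_countable_union_isNowhereDense]
  refine ⟨(fun x => ({x} : Set X)) '' s, ?_, hs.image _, ?_⟩
  · rintro t ⟨x, -, rfl⟩
    rw [isClosed_singleton.isNowhereDense_iff]
    by_contra hne
    obtain ⟨y, hy⟩ := Set.nonempty_iff_ne_empty.mpr hne
    have hyx : y = x := by simpa using interior_subset hy
    have h1 : interior ({x} : Set X) = {x} :=
      Set.Subset.antisymm interior_subset (by
        rintro z rfl
        exact hyx ▸ hy)
    exact hiso x (h1 ▸ isOpen_interior)
  · intro x hx
    exact ⟨{x}, ⟨x, hx, rfl⟩, rfl⟩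

/-- In a T1 Baire space without isolated points, nonempty open sets are uncountable. -/
private lemma open_not_countable_aux {X : Type*} [TopologicalSpace X] [T1Space X] [BaireSpace X]
    (hiso : ∀ x : X, ¬ IsOpen ({x} : Set X)) {U : Set X} (hU : IsOpen U) (hne : U.Nonempty) :
    ¬ U.Countable := by
  intro hc
  have hm : IsMeagre U := countable_isMeagre_aux hiso hc
  have hd : Dense Uᶜ := dense_of_mem_residual hm
  have : interior U = ∅ := interior_eq_empty_iff_dense_compl.mpr hd
  rw [hU.interior_eq] at this
  exact hne.ne_empty this

/-- For a crowded Baire separable metrizable CDH topological group `X`, there is a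
homeomorphism `h : X → X` such that `{ h x * x⁻¹ : x ∈ X }` is uncountable. -/
theorem exists_homeomorph_uncountable_displacement (X : Type*) [TopologicalSpace X]
    [Group X] [IsTopologicalGroup X] [TopologicalSpace.SeparableSpace X]
    [TopologicalSpace.MetrizableSpace X] [BaireSpace X]
    (hc : Crowded X) (hcdh : IsCDH X) :
    ∃ h : X ≃ₜ X, ¬ (Set.range fun x : X => h x * x⁻¹).Countable := by
  classical
  obtain ⟨hne, hiso⟩ := hc
  haveI : Nonempty X := hne
  letI : MetricSpace X := TopologicalSpace.metrizableSpaceMetric X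
  haveI : SecondCountableTopology X :=
    UniformSpace.secondCountable_of_separable X
  -- a countable dense set `D`
  obtain ⟨D, hDc, hDd⟩ := TopologicalSpace.exists_countable_dense X
  -- the countable set of "difference" elements
  set K : Set X := Set.image2 (fun a b => a⁻¹ * b) D D with hKdef
  have hKc : K.Countable := hDc.image2 hDc _
  -- a countable family of nonempty basic open sets
  obtain ⟨B, hBc, hBne, hB⟩ := TopologicalSpace.exists_countable_basis X
  have hBnonempty : B.Nonempty := by
    obtain ⟨x⟩ := hne
    obtain ⟨t, htB, hxt, -⟩ := hB.exists_subset_of_mem_open (Set.mem_univ x) isOpen_univ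
    exact ⟨t, htB⟩
  obtain ⟨V, hV⟩ := hBc.exists_eq_range hBnonempty
  have hVopen : ∀ n, IsOpen (V n) := fun n => hB.isOpen (hV ▸ Set.mem_range_self n)
  have hVne : ∀ n, (V n).Nonempty := fun n => by
    rcases Set.eq_empty_or_nonempty (V n) with h | h
    · exact absurd (h ▸ (hV ▸ Set.mem_range_self n : V n ∈ B)) hBne
    · exact h
  -- build the sequence `e` avoiding translated copies of `K`
  have H : ∀ (n : ℕ) (p : ∀ m, m < n → X), ∃ x, x ∈ V n ∧
      ∀ m (hm : m < n), x ∉ (fun k => p m hm * k) '' K := by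
    intro n p
    have hbad : (⋃ (m : Fin n), (fun k => p m m.2 * k) '' K).Countable :=
      Set.countable_iUnion fun m => hKc.image _
    have : ¬ V n ⊆ ⋃ (m : Fin n), (fun k => p m m.2 * k) '' K := by
      intro hsub
      exact open_not_countable_aux hiso (hVopen n) (hVne n) (hbad.mono hsub)
    obtain ⟨x, hxV, hxbad⟩ := Set.not_subset.mp this
    refine ⟨x, hxV, fun m hm hmem => hxbad ?_⟩
    exact Set.mem_iUnion.mpr ⟨⟨m, hm⟩, hmem⟩
  set e : ℕ → X := seqAux (V := V) (R := fun a b => b ∉ (fun k => a * k) '' K) H with hedef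
  have espec : ∀ n, e n ∈ V n ∧ ∀ m, m < n → e n ∉ (fun k => e m * k) '' K :=
    fun n => seqAux_spec (V := V) (R := fun a b => b ∉ (fun k => a * k) '' K) H n
  set E : Set X := Set.range e with hEdef
  have hEc : E.Countable := Set.countable_range e
  have hEd : Dense E := by
    rw [dense_iff_inter_open]
    intro U hU hUne
    obtain ⟨x, hx⟩ := hUne
    obtain ⟨t, htB, hxt, htU⟩ := hB.exists_subset_of_mem_open hx hU
    obtain ⟨n, rfl⟩ : ∃ n, V n = t := by
      have : t ∈ Set.range V := hV ▸ htB
      exact this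
    exact ⟨e n, htU (espec n).1, Set.mem_range_self n⟩
  -- apply CDH
  obtain ⟨h, hh⟩ := hcdh D E hDc hDd hEc hEd
  refine ⟨h, fun hS => ?_⟩
  -- suppose the displacement set `S` is countable
  set S : Set X := Set.range fun x : X => h x * x⁻¹ with hSdef
  haveI : Countable ↥S := hS.to_subtype
  set F : ↥S → Set X := fun s => {x | h x = (s : X) * x} with hFdef
  have hFclosed : ∀ s, IsClosed (F s) := fun s =>
    isClosed_eq h.continuous (continuous_const.mul continuous_id)
  have hFcover : ⋃ s, F s = Set.univ := by
    apply Set.eq_univ_of_forall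
    intro x
    refine Set.mem_iUnion.mpr ⟨⟨h x * x⁻¹, Set.mem_range_self x⟩, ?_⟩
    simp [hFdef, mul_assoc]
  obtain ⟨s, hsint⟩ := nonempty_interior_of_iUnion_of_closed hFclosed hFcover
  -- two distinct points of `D` inside the interior
  obtain ⟨d, hdU, hdD⟩ := hDd.inter_open_nonempty _ isOpen_interior hsint
  have hU'open : IsOpen (interior (F s) \ {d}) := isOpen_interior.sdiff isClosed_singleton
  have hU'ne : (interior (F s) \ {d}).Nonempty := by
    rcases Set.eq_empty_or_nonempty (interior (F s) \ {d}) with hemp | hne'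
    · have hsub : interior (F s) ⊆ {d} := by
        intro z hz
        by_contra hzd
        exact (Set.eq_empty_iff_forall_notMem.mp hemp z) ⟨hz, hzd⟩
      exact absurd ((Set.countable_singleton d).mono hsub)
        (open_not_countable_aux hiso isOpen_interior hsint)
    · exact hne'
  obtain ⟨d', hd'U, hd'D⟩ := hDd.inter_open_nonempty _ hU'open hU'ne
  have hd'ne : d' ≠ d := hd'U.2
  have hd'U' : d' ∈ interior (F s) := hd'U.1
  -- both displaced points are in `E`
  have hdE : h d ∈ E := hh ▸ Set.mem_image_of_mem h hdD
  have hd'E : h d' ∈ E := hh ▸ Set.mem_image_of_mem h hd'D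
  have hdF : h d = (s : X) * d := by
    have h1 : d ∈ F s := interior_subset hdU
    exact h1
  have hd'F : h d' = (s : X) * d' := by
    have h1 : d' ∈ F s := interior_subset hd'U'
    exact h1
  obtain ⟨n, hn⟩ := hdE
  obtain ⟨m, hm⟩ := hd'E
  -- the key combinatorial property of `e`
  have key : ∀ a b : X, a ∈ D → b ∈ D → ∀ i j : ℕ, e i = (s : X) * a → e j = (s : X) * b →
      a ≠ b → False := by
    intro a b haD hbD i j hi hj hab
    have hij : i ≠ j := by
      rintro rfl
      rw [hi] at hj
      exact hab (mul_left_cancel hj)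
    have hKmem : ∀ u v : X, u ∈ D → v ∈ D → u⁻¹ * v ∈ K :=
      fun u v hu hv => Set.mem_image2_of_mem hu hv
    rcases hij.lt_or_gt with hlt | hlt
    · -- i < j : e j ∈ e i * K
      have := (espec j).2 i hlt
      apply this
      refine ⟨a⁻¹ * b, hKmem a b haD hbD, ?_⟩
      simp only [hi, hj, mul_assoc, mul_inv_cancel_left]
    · have := (espec i).2 j hlt
      apply this
      refine ⟨b⁻¹ * a, hKmem b a hbD haD, ?_⟩
      simp only [hi, hj, mul_assoc, mul_inv_cancel_left]
  exact key d d' hdD hd'D n m (hn.trans hdF) (hm.trans hd'F) hd'ne.symm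
end

section
/- Every crowded separable metrizable space that is a λ-set is a meager space; in particular, no crowded separable metrizable λ-set is Polish. -/
/-- Every crowded separable metrizable λ-set is meager; in particular it is not Polish. -/
theorem crowded_lambdaSet_meager_not_polish (X : Type*) [TopologicalSpace X]
    [TopologicalSpace.SeparableSpace X] [TopologicalSpace.MetrizableSpace X]
    (hc : Crowded X) (hl : IsLambdaSpace X) :
    IsMeagre (Set.univ : Set X) ∧ ¬ PolishSpace X := by
  obtain ⟨D, hDcount, hDdense⟩ := TopologicalSpace.exists_countable_dense X
  have hT1 : T1Space X := by
    letI := TopologicalSpace.metrizableSpaceMetric X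
    infer_instance
  -- D is meagre: countable union of closed nowhere dense singletons
  have hDmeagre : IsMeagre D := by
    rw [isMeagre_iff_countable_union_isNowhereDense]
    refine ⟨(fun x => ({x} : Set X)) '' D, ?_, hDcount.image _, ?_⟩
    · rintro t ⟨x, -, rfl⟩
      rw [IsNowhereDense, closure_singleton]
      by_contra h
      have h1 : interior ({x} : Set X) = {x} := by
        have : interior ({x} : Set X) ⊆ {x} := interior_subset
        rcases Set.eq_empty_or_nonempty (interior ({x} : Set X)) with he | ⟨y, hy⟩
        · exact absurd he h
        · exact Set.Subset.antisymm this (by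
            intro z hz
            rcases this hy with rfl
            rcases hz with rfl
            exact hy)
      exact hc.2 x (h1 ▸ isOpen_interior)
    · intro x hx
      exact ⟨{x}, ⟨x, hx, rfl⟩, rfl⟩
  -- Dᶜ is meagre: D is dense Gδ
  have hDcmeagre : IsMeagre Dᶜ := by
    rw [IsMeagre, compl_compl]
    exact residual_of_dense_Gδ (hl D hDcount) hDdense
  have hmeagre : IsMeagre (Set.univ : Set X) := by
    have : (Set.univ : Set X) = D ∪ Dᶜ := (Set.union_compl_self D).symm
    rw [this, IsMeagre, Set.compl_union]
    exact Filter.inter_mem hDmeagre hDcmeagre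
  refine ⟨hmeagre, fun hp => ?_⟩
  -- In a Polish space, univ is not meagre
  letI := TopologicalSpace.upgradeIsCompletelyMetrizable X
  have hd : Dense ((Set.univ : Set X)ᶜ) := dense_of_mem_residual hmeagre
  rw [Set.compl_univ] at hd
  haveI := hc.1
  exact absurd hd.nonempty (by simp)
end

section
/- Every Bernstein set, viewed as a subspace of the Cantor set 2^ω, is a Baire space. -/
open Set PiNat Function

namespace BernsteinAux

lemma isOpen_cyl (x : ℕ → Bool) (n : ℕ) : IsOpen (cylinder x n) := by
  rw [cylinder_eq_pi]
  exact isOpen_set_pi (Finset.range n : Finset ℕ).finite_toSet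
    (fun i _ => isOpen_discrete _)

lemma exists_cylinder_subset {O : Set (ℕ → Bool)} {x : ℕ → Bool}
    (hO : IsOpen O) (hx : x ∈ O) : ∃ n, cylinder x n ⊆ O := by
  have h1 : O ∈ nhds x := hO.mem_nhds hx
  rw [nhds_pi, Filter.mem_pi] at h1
  obtain ⟨I, hIf, t, ht, hsub⟩ := h1
  obtain ⟨n, hn⟩ : ∃ n, ∀ i ∈ I, i < n := by
    obtain ⟨m, hm⟩ := hIf.bddAbove
    exact ⟨m + 1, fun i hi => Nat.lt_succ_of_le (hm hi)⟩
  refine ⟨n, fun y hy => hsub ?_⟩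
  intro i hi
  have : y i = x i := hy i (hn i hi)
  rw [this]
  exact mem_of_mem_nhds (ht i)

open Classical in
/-- One refinement step: shrink the cylinder `cylinder x n` to a cylinder inside `W`. -/
noncomputable def ext1 (W : Set (ℕ → Bool)) (x : ℕ → Bool) (n : ℕ) : ℕ × (ℕ → Bool) :=
  if h : ∃ p : ℕ × (ℕ → Bool),
      (∀ i < n, p.2 i = x i) ∧ n ≤ p.1 ∧ cylinder p.2 p.1 ⊆ W
  then h.choose else (n, x)

lemma ext1_spec {W : Set (ℕ → Bool)} (hWo : IsOpen W) (hWd : Dense W)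
    (x : ℕ → Bool) (n : ℕ) :
    (∀ i < n, (ext1 W x n).2 i = x i) ∧ n ≤ (ext1 W x n).1 ∧
      cylinder (ext1 W x n).2 (ext1 W x n).1 ⊆ W := by
  have h : ∃ p : ℕ × (ℕ → Bool),
      (∀ i < n, p.2 i = x i) ∧ n ≤ p.1 ∧ cylinder p.2 p.1 ⊆ W := by
    obtain ⟨y, hyc, hyW⟩ := hWd.inter_open_nonempty _ (isOpen_cyl x n)
      ⟨x, self_mem_cylinder x n⟩
    obtain ⟨m, hm⟩ := exists_cylinder_subset hWo hyW
    exact ⟨(max n m, y), fun i hi => hyc i hi, le_max_left _ _,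
      (cylinder_anti y (le_max_right n m)).trans hm⟩
  rw [ext1]
  rw [dif_pos h]
  exact h.choose_spec

variable (r : ℕ × (ℕ → Bool)) (W : ℕ → Set (ℕ → Bool))

/-- The Cantor scheme of cylinders: `node r W s` is a pair (depth, center). -/
noncomputable def node : List Bool → ℕ × (ℕ → Bool)
  | [] => r
  | b :: s =>
      let p := node s
      ext1 (W s.length) (update p.2 p.1 b) (p.1 + 1)

variable (hWo : ∀ n, IsOpen (W n)) (hWd : ∀ n, Dense (W n))

section
include hWo hWd

lemma node_cons_spec (b : Bool) (s : List Bool) :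
    (∀ i < (node r W s).1 + 1,
        (node r W (b :: s)).2 i = update (node r W s).2 (node r W s).1 b i) ∧
      (node r W s).1 + 1 ≤ (node r W (b :: s)).1 ∧
      cylinder (node r W (b :: s)).2 (node r W (b :: s)).1 ⊆ W s.length := by
  have := ext1_spec (hWo s.length) (hWd s.length)
    (update (node r W s).2 (node r W s).1 b) ((node r W s).1 + 1)
  exact this

lemma node_length_le (s : List Bool) : s.length ≤ (node r W s).1 := by
  induction s with
  | nil => exact Nat.zero_le _
  | cons b s ih =>
      have h := (node_cons_spec r W hWo hWd b s).2.1
      simpa using le_trans (Nat.succ_le_succ ih) h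

lemma node_cons_subset (b : Bool) (s : List Bool) :
    cylinder (node r W (b :: s)).2 (node r W (b :: s)).1 ⊆
      cylinder (node r W s).2 (node r W s).1 := by
  obtain ⟨hagree, hle, -⟩ := node_cons_spec r W hWo hWd b s
  intro z hz i hi
  have h1 : z i = (node r W (b :: s)).2 i :=
    hz i (lt_of_lt_of_le (Nat.lt_succ_of_lt hi) hle)
  have h2 : (node r W (b :: s)).2 i = update (node r W s).2 (node r W s).1 b i :=
    hagree i (Nat.lt_succ_of_lt hi)
  rw [h1, h2, update_of_ne hi.ne]

lemma node_cons_bit (b : Bool) (s : List Bool) {z : ℕ → Bool}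
    (hz : z ∈ cylinder (node r W (b :: s)).2 (node r W (b :: s)).1) :
    z (node r W s).1 = b := by
  obtain ⟨hagree, hle, -⟩ := node_cons_spec r W hWo hWd b s
  have h1 : z (node r W s).1 = (node r W (b :: s)).2 (node r W s).1 :=
    hz _ (lt_of_lt_of_le (Nat.lt_succ_self _) hle)
  have h2 : (node r W (b :: s)).2 (node r W s).1
      = update (node r W s).2 (node r W s).1 b (node r W s).1 :=
    hagree _ (Nat.lt_succ_self _)
  rw [h1, h2, update_self]

lemma node_res_subset (x : ℕ → Bool) {n n' : ℕ} (h : n ≤ n') :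
    cylinder (node r W (res x n')).2 (node r W (res x n')).1 ⊆
      cylinder (node r W (res x n)).2 (node r W (res x n)).1 := by
  induction n' with
  | zero => simpa [Nat.le_zero.mp h] using subset_rfl
  | succ m ih =>
      rcases Nat.lt_or_ge n (m + 1) with hlt | hge
      · have h1 := node_cons_subset r W hWo hWd (x m) (res x m)
        rw [res_succ]
        exact h1.trans (ih (Nat.lt_succ_iff.mp hlt))
      · have : n = m + 1 := le_antisymm h hge
        subst this; exact subset_rfl

lemma node_center_agree (x : ℕ → Bool) {n n' : ℕ} (h : n ≤ n') :
    ∀ i < (node r W (res x n)).1,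
      (node r W (res x n')).2 i = (node r W (res x n)).2 i := by
  intro i hi
  exact node_res_subset r W hWo hWd x h (self_mem_cylinder _ _) i hi

/-- The embedding of the Cantor space determined by the scheme. -/
noncomputable def emb (x : ℕ → Bool) : ℕ → Bool :=
  fun k => (node r W (res x (k + 1))).2 k

lemma emb_mem (x : ℕ → Bool) (n : ℕ) :
    emb r W x ∈ cylinder (node r W (res x n)).2 (node r W (res x n)).1 := by
  intro i hi
  show (node r W (res x (i + 1))).2 i = (node r W (res x n)).2 i
  have hi1 : i < (node r W (res x (i + 1))).1 :=
    lt_of_lt_of_le (Nat.lt_succ_self i)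
      (by simpa using node_length_le r W hWo hWd (res x (i + 1)))
  rcases le_total n (i + 1) with h | h
  · calc (node r W (res x (i + 1))).2 i
        = (node r W (res x (max n (i+1)))).2 i := by
          rw [node_center_agree r W hWo hWd x (le_max_right n (i+1)) i hi1]
      _ = (node r W (res x n)).2 i := by
          rw [node_center_agree r W hWo hWd x (le_max_left n (i+1)) i hi]
  · exact (node_center_agree r W hWo hWd x h i hi1).symm

lemma emb_injective : Function.Injective (emb r W) := by
  intro x y hxy
  by_contra hne
  have hex : ∃ n, x n ≠ y n := by
    by_contra hc
    push_neg at hc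
    exact hne (funext hc)
  set n := Nat.find hex with hn
  have hdiff : x n ≠ y n := Nat.find_spec hex
  have hres : res x n = res y n :=
    res_eq_res.mpr fun m hm => not_not.mp (Nat.find_min hex hm)
  have h1 : emb r W x (node r W (res x n)).1 = x n := by
    have := emb_mem r W hWo hWd x (n + 1)
    rw [res_succ] at this
    exact node_cons_bit r W hWo hWd (x n) (res x n) this
  have h2 : emb r W y (node r W (res x n)).1 = y n := by
    have := emb_mem r W hWo hWd y (n + 1)
    rw [res_succ, ← hres] at this
    exact node_cons_bit r W hWo hWd (y n) (res x n) this
  rw [hxy] at h1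
  exact hdiff (h1 ▸ h2.symm ▸ rfl)

lemma emb_continuous : Continuous (emb r W) := by
  refine continuous_pi fun k => ?_
  refine IsLocallyConstant.continuous ?_
  rw [IsLocallyConstant.iff_exists_open]
  intro x
  refine ⟨cylinder x (k + 1), isOpen_cyl x (k + 1), self_mem_cylinder x (k + 1),
    fun y hy => ?_⟩
  show (node r W (res y (k + 1))).2 k = (node r W (res x (k + 1))).2 k
  have : res y (k + 1) = res x (k + 1) := res_eq_res.mpr fun m hm => hy m hm
  rw [this]

lemma emb_range_subset_W (x : ℕ → Bool) (n : ℕ) : emb r W x ∈ W n := by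
  have h1 := emb_mem r W hWo hWd x (n + 1)
  have h2 := (node_cons_spec r W hWo hWd (x n) (res x n)).2.2
  rw [res_succ] at h1
  simpa using h2 h1

end

/-- Inside any nonempty open set of the Cantor space, and inside countably many dense
open sets, one can find a copy of the Cantor space. -/
lemma exists_cantor_copy (V : Set (ℕ → Bool)) (hVo : IsOpen V) (hVne : V.Nonempty)
    (W : ℕ → Set (ℕ → Bool)) (hWo : ∀ n, IsOpen (W n)) (hWd : ∀ n, Dense (W n)) :
    ∃ K : Set (ℕ → Bool), K ⊆ V ∩ (⋂ n, W n) ∧ Nonempty (K ≃ₜ (ℕ → Bool)) := by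
  obtain ⟨x0, hx0⟩ := hVne
  obtain ⟨m0, hm0⟩ := exists_cylinder_subset hVo hx0
  set r : ℕ × (ℕ → Bool) := (m0, x0) with hr
  set g := emb r W with hg
  have hcont : Continuous g := emb_continuous r W hWo hWd
  have hinj : Function.Injective g := emb_injective r W hWo hWd
  refine ⟨Set.range g, ?_, ?_⟩
  · rintro - ⟨x, rfl⟩
    constructor
    · have h := emb_mem r W hWo hWd x 0
      simp only [res_zero] at h
      exact hm0 (by simpa [node, hr] using h)
    · exact mem_iInter.mpr fun n => emb_range_subset_W r W hWo hWd x n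
  · have hcont' : Continuous fun x => (⟨g x, Set.mem_range_self x⟩ : Set.range g) :=
      hcont.subtype_mk _
    exact ⟨(Continuous.homeoOfEquivCompactToT2
      (f := Equiv.ofInjective g hinj) hcont').symm⟩

end BernsteinAux

/-- A subset `X` of the Cantor set `2^ω` is a Bernstein set if both `X` and its
complement meet every copy of `2^ω` inside `2^ω`. -/
def IsBernsteinSet (X : Set (ℕ → Bool)) : Prop :=
  ∀ K : Set (ℕ → Bool), Nonempty (K ≃ₜ (ℕ → Bool)) →
    (X ∩ K).Nonempty ∧ (Xᶜ ∩ K).Nonempty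

/-- Every Bernstein set, viewed as a subspace of the Cantor set, is a Baire space. -/
theorem bernsteinSet_is_baire (X : Set (ℕ → Bool)) (h : IsBernsteinSet X) :
    BaireSpace X := by
  classical
  -- X is dense in the Cantor space
  have hXdense : Dense X := by
    rw [dense_iff_inter_open]
    intro V hVo hVne
    obtain ⟨K, hKsub, hKh⟩ := BernsteinAux.exists_cantor_copy V hVo hVne
      (fun _ => Set.univ) (fun _ => isOpen_univ) (fun _ => dense_univ)
    obtain ⟨z, hzX, hzK⟩ := (h K hKh).1
    exact ⟨z, (hKsub hzK).1, hzX⟩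
  constructor
  intro f hfo hfd
  rw [dense_iff_inter_open]
  rintro U hUo ⟨u0, hu0⟩
  -- realize U and the f n as preimages of ambient open sets
  obtain ⟨V, hVo, hVU⟩ := isOpen_induced_iff.mp hUo
  choose Vf hVfo hVff using fun n => isOpen_induced_iff.mp (hfo n)
  -- each Vf n is dense in the ambient Cantor space
  have hVfd : ∀ n, Dense (Vf n) := by
    intro n
    rw [dense_iff_inter_open]
    intro O hOo hOne
    obtain ⟨z, hzO, hzX⟩ := hXdense.inter_open_nonempty O hOo hOne
    have hzd : Dense (f n) := hfd n
    obtain ⟨⟨w, hwX⟩, hw1, hw2⟩ := hzd.inter_open_nonempty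
      (Subtype.val ⁻¹' O) (hOo.preimage continuous_subtype_val) ⟨⟨z, hzX⟩, hzO⟩
    refine ⟨w, hw1, ?_⟩
    have : (⟨w, hwX⟩ : X) ∈ Subtype.val ⁻¹' (Vf n) := by rw [hVff n]; exact hw2
    exact this
  -- V is nonempty and open
  have hVne : V.Nonempty := ⟨u0, by rw [← hVU] at hu0; exact hu0⟩
  -- extract a Cantor copy inside V ∩ ⋂ Vf n
  obtain ⟨K, hKsub, hKh⟩ := BernsteinAux.exists_cantor_copy V hVo hVne Vf hVfo hVfd
  obtain ⟨z, hzX, hzK⟩ := (h K hKh).1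
  have hzV : z ∈ V := (hKsub hzK).1
  have hzW : ∀ n, z ∈ Vf n := fun n => Set.mem_iInter.mp (hKsub hzK).2 n
  refine ⟨⟨z, hzX⟩, ?_, ?_⟩
  · rw [← hVU]; exact hzV
  · exact Set.mem_iInter.mpr fun n => by rw [← hVff n]; exact hzW n
end
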